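/- Every set-indexed process X with independent increments is set-Markov. -/

import Mathlib

open MeasureTheory ProbabilityTheory Set
open scoped ENNReal

noncomputable section

namespace SetIndexedMarkov

variable {T : Type*} [TopologicalSpace T] {Ω : Type*} [mΩ : MeasurableSpace Ω]

/-- `𝒜(u)`: the collection of all finite unions of sets in `𝒜`. -/
def Au (𝒜 : Set (Set T)) : Set (Set T) :=
  {B | ∃ s : Finset (Set T), ↑s ⊆ 𝒜 ∧ s.Nonempty ∧ B = ⋃₀ ↑s}

/-- `𝒞`: the collection of all sets of the form `A \ B` with `A ∈ 𝒜`, `B ∈ 𝒜(u)`. -/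
def CC (𝒜 : Set (Set T)) : Set (Set T) :=
  {C | ∃ A ∈ 𝒜, ∃ B ∈ Au 𝒜, C = A \ B}

/-- `∅' := ⋂ {A ∈ 𝒜 : A ≠ ∅}`, the minimal set of `𝒜`. -/
def emptyPrime (𝒜 : Set (Set T)) : Set T := ⋂₀ {A ∈ 𝒜 | A ≠ ∅}

/-- The standing structural assumptions on the indexing collection `𝒜`: a semilattice of
closed subsets of the compact Hausdorff space `T`, containing `∅` and `T`, closed under
arbitrary (nonempty) intersections, and containing no two disjoint nonempty sets. -/
structure IsIndexing (𝒜 : Set (Set T)) : Prop where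
  closed : ∀ A ∈ 𝒜, IsClosed A
  empty_mem : ∅ ∈ 𝒜
  univ_mem : Set.univ ∈ 𝒜
  sInter_mem : ∀ S ⊆ 𝒜, S.Nonempty → ⋂₀ S ∈ 𝒜
  no_disjoint : ∀ A ∈ 𝒜, ∀ B ∈ 𝒜, A.Nonempty → B.Nonempty → (A ∩ B).Nonempty

/-- The σ-field generated by a real random variable. -/
def sigOf (f : Ω → ℝ) : MeasurableSpace Ω := MeasurableSpace.comap f inferInstance

/-- The minimal filtration `ℱ_B = σ(X_A : A ∈ 𝒜, A ⊆ B)`. -/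
def filt (𝒜 : Set (Set T)) (X : Set T → Ω → ℝ) (B : Set T) : MeasurableSpace Ω :=
  ⨆ A ∈ {A | A ∈ 𝒜 ∧ A ⊆ B}, sigOf (X A)

/-- `G` and `H` are conditionally independent given `K` (under `P`):
`E[1_G 1_H | K] = E[1_G | K] ⬝ E[1_H | K]` a.s. for all `G`-, `H`-measurable sets. -/
def CondIndepGiven (P : Measure Ω) (G H K : MeasurableSpace Ω) : Prop :=
  ∀ g h : Set Ω, MeasurableSet[G] g → MeasurableSet[H] h →
    (P[((g ∩ h).indicator fun _ => (1 : ℝ)) | K]) =ᵐ[P]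
      fun ω => (P[(g.indicator fun _ => (1 : ℝ)) | K]) ω *
        (P[(h.indicator fun _ => (1 : ℝ)) | K]) ω

/-- Every `X_B`, `B ∈ 𝒜(u)`, is a (measurable) random variable. -/
def MeasOnAu (𝒜 : Set (Set T)) (X : Set T → Ω → ℝ) : Prop :=
  ∀ B ∈ Au 𝒜, Measurable (X B)

/-- The process `X` (viewed on `𝒜(u)`) is almost surely finitely additive, i.e. it is the
(a.s. unique) additive extension of its restriction to `𝒜`: it vanishes a.s. at `∅` and is
a.s. modular on the lattice `𝒜(u)`. -/
def AddExtension (𝒜 : Set (Set T)) (P : Measure Ω) (X : Set T → Ω → ℝ) : Prop :=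
  (∀ᵐ ω ∂P, X ∅ ω = 0) ∧
    ∀ B ∈ Au 𝒜, ∀ B' ∈ Au 𝒜,
      ∀ᵐ ω ∂P, X (B ∪ B') ω + X (B ∩ B') ω = X B ω + X B' ω

/-- `X` is set-Markov: for all `A ∈ 𝒜`, `B ∈ 𝒜(u)`, `ℱ_B ⟂ σ(X_{A∖B}) | σ(X_B)`,
where `X_{A∖B} = X_{A∪B} - X_B`. -/
def SetMarkov (𝒜 : Set (Set T)) (P : Measure Ω) (X : Set T → Ω → ℝ) : Prop :=
  ∀ A ∈ 𝒜, ∀ B ∈ Au 𝒜,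
    CondIndepGiven P (filt 𝒜 X B) (sigOf fun ω => X (A ∪ B) ω - X B ω) (sigOf (X B))

/-- A flow: an increasing map `f : [0,a] → 𝒜(u)`. -/
def IsFlow (𝒜 : Set (Set T)) (a : ℝ) (f : ℝ → Set T) : Prop :=
  (∀ t ∈ Set.Icc (0 : ℝ) a, f t ∈ Au 𝒜) ∧
    ∀ s t : ℝ, 0 ≤ s → s ≤ t → t ≤ a → f s ⊆ f t

/-- A continuous flow. -/
def IsContinuousFlow (𝒜 : Set (Set T)) (a : ℝ) (f : ℝ → Set T) : Prop :=
  IsFlow 𝒜 a f ∧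
    (∀ t ∈ Set.Icc (0 : ℝ) a, ∀ u : ℕ → ℝ, (∀ n, u n ∈ Set.Icc t a) → Antitone u →
      Filter.Tendsto u Filter.atTop (nhds t) → f t = ⋂ n, f (u n)) ∧
    (∀ t ∈ Set.Icc (0 : ℝ) a, ∀ u : ℕ → ℝ, (∀ n, u n ∈ Set.Icc 0 t) → Monotone u →
      Filter.Tendsto u Filter.atTop (nhds t) → f t = closure (⋃ n, f (u n)))

/-- A simple flow: a continuous flow starting at `∅'` which is piecewise `𝒜`-valued. -/
def IsSimpleFlow (𝒜 : Set (Set T)) (a : ℝ) (f : ℝ → Set T) : Prop :=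
  IsContinuousFlow 𝒜 a f ∧ f 0 = emptyPrime 𝒜 ∧
    ∃ (n : ℕ) (t : ℕ → ℝ) (g : ℕ → ℝ → Set T),
      0 < n ∧ t 0 = 0 ∧ t n = a ∧ (∀ i < n, t i < t (i + 1)) ∧
      (∀ i < n, ∀ s ∈ Set.Icc (t i) (t (i + 1)), g (i + 1) s ∈ 𝒜) ∧
      (∀ i < n, ∀ s u : ℝ, t i ≤ s → s ≤ u → u ≤ t (i + 1) → g (i + 1) s ⊆ g (i + 1) u) ∧
      (∀ i < n, ∀ s ∈ Set.Icc (t i) (t (i + 1)),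
        f s = (⋃ j ∈ Finset.Icc 1 i, g j (t j)) ∪ g (i + 1) s)

/-- A finite sub-semilattice of `𝒜`: a finite nonempty subfamily closed under intersection. -/
def IsSubSemilattice (𝒜 : Set (Set T)) (L : Finset (Set T)) : Prop :=
  ↑L ⊆ 𝒜 ∧ L.Nonempty ∧ ∀ A ∈ L, ∀ B ∈ L, A ∩ B ∈ L

/-- A consistent ordering `{A₀ = ∅', A₁, …, Aₙ}` of the finite sub-semilattice `L`. -/
structure ConsistentOrdering (𝒜 : Set (Set T)) (L : Finset (Set T)) (n : ℕ)
    (A : ℕ → Set T) : Prop where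
  zero : A 0 = emptyPrime 𝒜
  first : A 1 = ⋂₀ ↑L
  mem : ∀ i, 1 ≤ i → i ≤ n → A i ∈ L
  inj : ∀ i j, 1 ≤ i → i ≤ n → 1 ≤ j → j ≤ n → A i = A j → i = j
  surj : ∀ B ∈ L, ∃ i, 1 ≤ i ∧ i ≤ n ∧ A i = B
  consistent : ∀ i, 1 ≤ i → i ≤ n → ∀ B ∈ L, B ⊆ A i → B ≠ A i → ∃ j < i, A j = B

/-- `⋃_{j=1}^{i} A_j`. -/
def Uu (A : ℕ → Set T) (i : ℕ) : Set T := ⋃ j ∈ Finset.Icc 1 i, A j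

/-- `⋃_{j=0}^{i} A_j`. -/
def U0 (A : ℕ → Set T) (i : ℕ) : Set T := ⋃ j ∈ Finset.range (i + 1), A j

/-- The left neighbourhood `C_j = A_j ∖ ⋃_{l=0}^{j-1} A_l`. -/
def leftNbhd (A : ℕ → Set T) (j : ℕ) : Set T := A j \ ⋃ l ∈ Finset.range j, A l

/-- A (set-indexed) transition system `𝒬 = (Q_{BB'})_{B ⊆ B'}`. -/
def IsTransitionSystem (𝒜 : Set (Set T)) (Q : Set T → Set T → Kernel ℝ ℝ) : Prop :=
  (∀ B ∈ Au 𝒜, ∀ B' ∈ Au 𝒜, B ⊆ B' → IsMarkovKernel (Q B B')) ∧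
    (∀ B ∈ Au 𝒜, ∀ x : ℝ, Q B B x = Measure.dirac x) ∧
    (∀ B ∈ Au 𝒜, ∀ B' ∈ Au 𝒜, ∀ B'' ∈ Au 𝒜, B ⊆ B' → B' ⊆ B'' →
      ∀ (x : ℝ) (Γ : Set ℝ), MeasurableSet Γ →
        Q B B'' x Γ = ∫⁻ y, Q B' B'' y Γ ∂(Q B B' x))

/-- `X` is `𝒬`-Markov: `P[X_{B'} ∈ Γ | ℱ_B] = Q_{BB'}(X_B; Γ)` a.s. -/
def QMarkov (𝒜 : Set (Set T)) (P : Measure Ω) (X : Set T → Ω → ℝ)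
    (Q : Set T → Set T → Kernel ℝ ℝ) : Prop :=
  ∀ B ∈ Au 𝒜, ∀ B' ∈ Au 𝒜, B ⊆ B' → ∀ Γ : Set ℝ, MeasurableSet Γ →
    (P[fun ω => Γ.indicator (fun _ => (1 : ℝ)) (X B' ω) | filt 𝒜 X B]) =ᵐ[P]
      fun ω => (Q B B' (X B ω) Γ).toReal

/-- Iterated integration of the coordinates `i+1, …, i+m` of a path, each coordinate `j+1`
being integrated with respect to the kernel `κ j` applied at the coordinate `j`. -/
def stepInt (κ : ℕ → Kernel ℝ ℝ) : ℕ → ℕ → ((ℕ → ℝ) → ℝ≥0∞) → (ℕ → ℝ) → ℝ≥0∞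
  | _, 0, f, x => f x
  | i, m + 1, f, x =>
      ∫⁻ y, stepInt κ (i + 1) m f (Function.update x (i + 1) y) ∂(κ i (x i))

/-- The iterated integral
`∫ … ∫ f(x₀,…,xₙ) κ_{n-1}(x_{n-1}; dxₙ) ⋯ κ_0(x₀; dx₁) μ(dx₀)`. -/
def kiter (μ : Measure ℝ) (κ : ℕ → Kernel ℝ ℝ) (n : ℕ) (f : (ℕ → ℝ) → ℝ≥0∞) : ℝ≥0∞ :=
  ∫⁻ x₀, stepInt κ 0 n f (fun _ => x₀) ∂μ

/-- The sequence of kernels `Q_{∅'A₁}, Q_{A₁, A₁∪A₂}, …, Q_{⋃_{j<n}A_j, ⋃_{j≤n}A_j}`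
attached to a consistent ordering `A` by a set-indexed transition system `Q`. -/
def kerSeq (Q : Set T → Set T → Kernel ℝ ℝ) (A : ℕ → Set T) (i : ℕ) : Kernel ℝ ℝ :=
  Q (if i = 0 then A 0 else Uu A i) (Uu A (i + 1))

/-- The integrand `1_{Γ₀}(y₀) 1_{Γ₁}(y₁) ∏_{i=2}^{n} 1_{Γ_i}(y_{π(i)} - y_{π(i)-1})`. -/
def PermIntegrand (Γ : ℕ → Set ℝ) (π : ℕ → ℕ) (n : ℕ) (y : ℕ → ℝ) : ℝ≥0∞ :=
  (Γ 0).indicator 1 (y 0) * (Γ 1).indicator 1 (y 1) *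
    ∏ i ∈ Finset.Icc 2 n, (Γ i).indicator 1 (y (π i) - y (π i - 1))

/-- Assumption 1: the finite dimensional distributions built from `𝒬` over the left
neighbourhoods of a finite sub-semilattice do not depend on the consistent ordering. -/
def Assumption1 (𝒜 : Set (Set T)) (Q : Set T → Set T → Kernel ℝ ℝ) (μ : Measure ℝ) : Prop :=
  ∀ (L : Finset (Set T)) (n : ℕ) (A A' : ℕ → Set T) (π : Equiv.Perm ℕ),
    IsSubSemilattice 𝒜 L → ConsistentOrdering 𝒜 L n A → ConsistentOrdering 𝒜 L n A' →
    π 1 = 1 → (∀ i, ¬(1 ≤ i ∧ i ≤ n) → π i = i) →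
    (∀ i, 1 ≤ i → i ≤ n → A i = A' (π i)) →
    ∀ Γ : ℕ → Set ℝ, (∀ i, MeasurableSet (Γ i)) →
      kiter μ (kerSeq Q A) n (PermIntegrand Γ id n) =
        kiter μ (kerSeq Q A') n (PermIntegrand Γ π n)

/-- `X` has independent increments. -/
def IndepIncrements (𝒜 : Set (Set T)) (P : Measure Ω) (X : Set T → Ω → ℝ) : Prop :=
  ∀ (n : ℕ) (A B : ℕ → Set T),
    (∀ i < n, A i ∈ 𝒜) → (∀ i < n, B i ∈ Au 𝒜) →
    (∀ i < n, ∀ j < n, i ≠ j → Disjoint (A i \ B i) (A j \ B j)) →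
    iIndepFun
      (fun i : Fin n => fun ω => X (A i ∪ B i) ω - X (B i) ω) P

/-- The trace `X^f` of `X` along the flow `f` is Markov with the one-dimensional
transition system `Qf`. -/
def QMarkovFlow (𝒜 : Set (Set T)) (P : Measure Ω) (X : Set T → Ω → ℝ)
    (a : ℝ) (f : ℝ → Set T) (Qf : ℝ → ℝ → Kernel ℝ ℝ) : Prop :=
  ∀ s t : ℝ, 0 ≤ s → s < t → t ≤ a → ∀ Γ : Set ℝ, MeasurableSet Γ →
    (P[fun ω => Γ.indicator (fun _ => (1 : ℝ)) (X (f t) ω) | filt 𝒜 X (f s)]) =ᵐ[P]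
      fun ω => (Qf s t (X (f s) ω) Γ).toReal

/-- A one-dimensional transition system on the time interval `[0,a]`. -/
def IsFlowTransition (a : ℝ) (Q : ℝ → ℝ → Kernel ℝ ℝ) : Prop :=
  (∀ s t : ℝ, 0 ≤ s → s < t → t ≤ a → IsMarkovKernel (Q s t)) ∧
    ∀ s t u : ℝ, 0 ≤ s → s < t → t < u → u ≤ a →
      ∀ (x : ℝ) (Γ : Set ℝ), MeasurableSet Γ →
        Q s u x Γ = ∫⁻ y, Q t u y Γ ∂(Q s t x)

/-- The simple flow `f` connects the sets of a finite sub-semilattice in the sense of the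
consistent ordering `A`, with partition `t` of `[0,a]`. -/
def Connects (𝒜 : Set (Set T)) (n : ℕ) (A : ℕ → Set T) (a : ℝ) (t : ℕ → ℝ)
    (f : ℝ → Set T) : Prop :=
  t 0 = 0 ∧ t n = a ∧ (∀ i < n, t i < t (i + 1)) ∧
    (∀ i ≤ n, f (t i) = Uu A i) ∧
    ∃ g : ℕ → ℝ → Set T,
      (∀ i < n, ∀ s ∈ Set.Icc (t i) (t (i + 1)), g (i + 1) s ∈ 𝒜) ∧
      (∀ i < n, ∀ s u : ℝ, t i ≤ s → s ≤ u → u ≤ t (i + 1) → g (i + 1) s ⊆ g (i + 1) u) ∧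
      (∀ i < n, g (i + 1) (t i) = A i ∧ g (i + 1) (t (i + 1)) = A (i + 1)) ∧
      (∀ i < n, ∀ s ∈ Set.Icc (t i) (t (i + 1)),
        f s = (⋃ j ∈ Finset.Icc 1 i, A j) ∪ g (i + 1) s)

/-- `ℱ_{∂B} = σ(X_A : A ∈ 𝒜, A ⊆ B, A ⊄ B°)`. -/
def filtBoundary (𝒜 : Set (Set T)) (X : Set T → Ω → ℝ) (B : Set T) : MeasurableSpace Ω :=
  ⨆ A ∈ {A | A ∈ 𝒜 ∧ A ⊆ B ∧ ¬ A ⊆ interior B}, sigOf (X A)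

/-- `ℱ_{B^c} = σ(X_A : A ∈ 𝒜, A ⊄ B)`. -/
def filtComp (𝒜 : Set (Set T)) (X : Set T → Ω → ℝ) (B : Set T) : MeasurableSpace Ω :=
  ⨆ A ∈ {A | A ∈ 𝒜 ∧ ¬ A ⊆ B}, sigOf (X A)

/-- The initial distribution of `X`: the law of `X_{∅'}`. -/
def InitialLaw (P : Measure Ω) (X : Set T → Ω → ℝ) (𝒜 : Set (Set T)) : Measure ℝ :=
  P.map (X (emptyPrime 𝒜))

/-- The measure `Q_{BB'}(x; ·) = F_{B'∖B}(· - x)`, i.e. the law of `X_{B'} - X_B + x`. -/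
def incLaw (P : Measure Ω) (X : Set T → Ω → ℝ) (B B' : Set T) (x : ℝ) : Measure ℝ :=
  P.map fun ω => X B' ω - X B ω + x

/-!
Fix `A ∈ 𝒜` and `B ∈ 𝒜(u)`. Finitely many sets `D ⊆ B` of `𝒜(u)` are unions of members of a
finite `∩`-closed family `L ⊆ 𝒜` of subsets of `B`. Enumerate `L = {E₀, E₁, …}` along a linear
extension of inclusion: additivity writes every `X_D` almost surely as a sum of the increments
`X_{E_j ∖ (E₀ ∪ ⋯ ∪ E_{j-1})}`, whose sets are pairwise disjoint and disjoint from `A ∖ B`. So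
`(X_D)_D` is independent of `X_{A ∖ B}`; passing to the directed supremum, `ℱ_B ∨ σ(X_B)` is
independent of `X_{A ∖ B}`, and this makes `ℱ_B` and `σ(X_{A ∖ B})` conditionally independent
given `σ(X_B)`.
-/

theorem IsIndexing.infClosed {𝒜 : Set (Set T)} (h𝒜 : IsIndexing 𝒜) : InfClosed 𝒜 :=
  fun A hA A' hA' => by
    simpa using h𝒜.sInter_mem {A, A'} (pair_subset hA hA') (insert_nonempty A {A'})

theorem _root_.Set.Finite.exists_enum_lt_imp_lt {α : Type*} [PartialOrder α] {s : Set α}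
    (hs : s.Finite) :
    ∃ (m : ℕ) (e : Fin m → α), Function.Injective e ∧ range e = s ∧
      ∀ i j, e i < e j → i < j := by
  -- `LinearExtension α` is `α` itself, ordered by a linear order extending `≤`
  let s' : Finset (LinearExtension α) := hs.toFinset
  let e := s'.orderEmbOfFin rfl
  refine ⟨s'.card, fun i => (e i : α), e.injective, ?_, fun i j hij => ?_⟩
  · exact (s'.range_orderEmbOfFin rfl).trans hs.coe_toFinset
  · exact e.lt_iff_lt.1 ((toLinearExtension.monotone hij.le).lt_of_ne hij.ne)

section Independence

variable {Ω : Type*} {mΩ : MeasurableSpace Ω} {μ : Measure Ω}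

theorem _root_.ProbabilityTheory.indep_iSup_of_forall_finset [IsZeroOrProbabilityMeasure μ]
    {ι : Type*} {m : ι → MeasurableSpace Ω} {m' : MeasurableSpace Ω}
    (h : ∀ F : Finset ι, Indep (⨆ i ∈ F, m i) m' μ) (hm : ∀ i, m i ≤ mΩ) (hm' : m' ≤ mΩ) :
    Indep (⨆ i, m i) m' μ := by
  classical
  rw [iSup_eq_iSup_finset]
  exact indep_iSup_of_directed_le h (fun F => iSup₂_le fun i _ => hm i) hm'
    (Monotone.directed_le fun F G hFG => biSup_mono fun _ hi => Finset.mem_of_subset hFG hi)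

theorem _root_.ProbabilityTheory.IndepFun.indep_iSup_comap {ι β γ : Type*}
    [mβ : MeasurableSpace β] [mγ : MeasurableSpace γ] {f : ι → Ω → β} {g : Ω → γ}
    (h : IndepFun (fun ω i => f i ω) g μ) :
    Indep (⨆ i, mβ.comap (f i)) (mγ.comap g) μ := by
  rw [IndepFun_iff_Indep] at h
  exact indep_of_indep_of_le_left h
    (iSup_le fun i => Measurable.comap_le <|
      (measurable_pi_apply i).comp (comap_measurable fun ω (i : ι) => f i ω))

theorem _root_.ProbabilityTheory.iIndepFun.indepFun_pi_of_ne {ι κ β : Type*} [Fintype κ]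
    [DecidableEq ι] [MeasurableSpace β] {f : ι → Ω → β} (h : iIndepFun f μ)
    (hf : ∀ i, Measurable (f i))
    {g : κ → ι} {i₀ : ι} (hg : ∀ k, g k ≠ i₀) :
    IndepFun (fun ω k => f (g k) ω) (f i₀) μ := by
  have hdisj : Disjoint (Finset.univ.image g) {i₀} := by
    simpa [Finset.disjoint_singleton_right] using hg
  have hψ : Measurable fun v : ({i₀} : Finset ι) → β => v ⟨i₀, Finset.mem_singleton_self i₀⟩ :=
    measurable_pi_apply _
  exact (h.indepFun_finset _ _ hdisj hf).comp
    (measurable_pi_lambda (fun v k => v ⟨g k, Finset.mem_image_of_mem g (Finset.mem_univ k)⟩)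
      fun k => measurable_pi_apply _) hψ

end Independence

section CondIndep

variable {Ω : Type*} [mΩ : MeasurableSpace Ω] {P : Measure Ω} [IsFiniteMeasure P]

theorem condIndepGiven_of_indep {mF mH mK : MeasurableSpace Ω} (hF : mF ≤ mΩ) (hH : mH ≤ mΩ)
    (hK : mK ≤ mΩ) (h : Indep (mF ⊔ mK) mH P) : CondIndepGiven (mΩ := mΩ) P mF mH mK := by
  -- `mF`, `mH`, `mK` are local instances as well: put the ambient σ-algebra back on top
  let _ := mΩ
  intro g k hg hk
  have hFK : mF ⊔ mK ≤ mΩ := sup_le hF hK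
  set χg : Ω → ℝ := g.indicator 1
  set χk : Ω → ℝ := k.indicator 1
  have hχg : StronglyMeasurable[mF ⊔ mK] χg :=
    (stronglyMeasurable_const.indicator hg).mono le_sup_left
  have hχk : StronglyMeasurable[mH] χk := stronglyMeasurable_const.indicator hk
  have hint : ∀ s, MeasurableSet s → Integrable (s.indicator (1 : Ω → ℝ)) P :=
    fun s hs => (integrable_const 1).indicator hs
  have hgk : (g ∩ k).indicator (1 : Ω → ℝ) = χg * χk := Set.inter_indicator_one
  -- `χk` is independent of `mF ⊔ mK`, so both of its conditional expectations are its mean.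
  have hbig : P[χk | mF ⊔ mK] =ᵐ[P] fun _ => P[χk] := condExp_indep_eq hH hFK hχk h.symm
  have hsmall : P[χk | mK] =ᵐ[P] fun _ => P[χk] :=
    condExp_indep_eq hH hK hχk (indep_of_indep_of_le_right h.symm le_sup_right)
  change P[(g ∩ k).indicator 1 | mK] =ᵐ[P] fun ω => P[χg | mK] ω * P[χk | mK] ω
  calc P[(g ∩ k).indicator 1 | mK]
      =ᵐ[P] P[P[χg * χk | mF ⊔ mK] | mK] := by
        rw [hgk]; exact (condExp_condExp_of_le le_sup_right hFK).symm
    _ =ᵐ[P] P[P[χk] • χg | mK] := by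
        refine condExp_congr_ae ?_
        filter_upwards [condExp_mul_of_stronglyMeasurable_left hχg (hgk ▸ hint _
          ((hF _ hg).inter (hH _ hk))) (hint _ (hH _ hk)), hbig] with ω h1 h2
        rw [h1, Pi.mul_apply, h2, Pi.smul_apply, smul_eq_mul, mul_comm]
    _ =ᵐ[P] P[χk] • P[χg | mK] := condExp_smul _ _ _
    _ =ᵐ[P] fun ω => P[χg | mK] ω * P[χk | mK] ω := by
        filter_upwards [hsmall] with ω h1
        rw [h1, Pi.smul_apply, smul_eq_mul, mul_comm]

end CondIndep

section Increments

variable {T Ω : Type*} [MeasurableSpace Ω] {𝒜 : Set (Set T)}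

theorem mem_Au_of_mem {A : Set T} (hA : A ∈ 𝒜) : A ∈ Au 𝒜 :=
  ⟨{A}, by simpa using hA, Finset.singleton_nonempty A, by simp⟩

theorem union_mem_Au {A B : Set T} (hA : A ∈ 𝒜) (hB : B ∈ Au 𝒜) : A ∪ B ∈ Au 𝒜 := by
  classical
  obtain ⟨s, hs, hne, rfl⟩ := hB
  refine ⟨insert A s, ?_, Finset.insert_nonempty A s, by simp⟩
  simpa [Set.insert_subset_iff] using ⟨hA, hs⟩

theorem biUnion_mem_Au (hemp : ∅ ∈ 𝒜) {ι : Type*} (S : Finset ι) {E : ι → Set T}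
    (hE : ∀ j ∈ S, E j ∈ 𝒜) : ⋃ j ∈ S, E j ∈ Au 𝒜 := by
  classical
  refine ⟨insert ∅ (S.image E), ?_, Finset.insert_nonempty _ _, by simp⟩
  simpa [Set.insert_subset_iff, hemp, Set.subset_def] using hE

/-- The paper's `X_{A ∖ B}`. -/
def increment (X : Set T → Ω → ℝ) (A B : Set T) : Ω → ℝ := fun ω => X (A ∪ B) ω - X B ω

variable {P : Measure Ω} {X : Set T → Ω → ℝ}

theorem measurable_increment (hmeas : MeasOnAu 𝒜 X) {A B : Set T} (hA : A ∈ 𝒜)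
    (hB : B ∈ Au 𝒜) : Measurable (increment X A B) :=
  (hmeas _ (union_mem_Au hA hB)).sub (hmeas B hB)

theorem IndepIncrements.indepFun_increment (hii : IndepIncrements 𝒜 P X)
    (hmeas : MeasOnAu 𝒜 X) {A B : Set T} (hA : A ∈ 𝒜) (hB : B ∈ Au 𝒜) {m : ℕ}
    {E F : Fin m → Set T} (hE : ∀ j, E j ∈ 𝒜) (hF : ∀ j, F j ∈ Au 𝒜)
    (hEF : Pairwise fun i j => Disjoint (E i \ F i) (E j \ F j))
    (hAB : ∀ j, Disjoint (E j \ F j) (A \ B)) :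
    IndepFun (fun ω j => increment X (E j) (F j) ω) (increment X A B) P := by
  let E' : ℕ → Set T := fun k => if h : k < m then E ⟨k, h⟩ else A
  let F' : ℕ → Set T := fun k => if h : k < m then F ⟨k, h⟩ else B
  have hE' : ∀ k < m + 1, E' k ∈ 𝒜 := by
    intro k _
    simp only [E']
    split_ifs
    exacts [hE _, hA]
  have hF' : ∀ k < m + 1, F' k ∈ Au 𝒜 := by
    intro k _
    simp only [F']
    split_ifs
    exacts [hF _, hB]
  have hdisj : ∀ i < m + 1, ∀ j < m + 1, i ≠ j → Disjoint (E' i \ F' i) (E' j \ F' j) := by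
    intro i _ j _ hij
    simp only [E', F']
    split_ifs
    · exact hEF fun h => hij (Fin.mk.inj h)
    · exact hAB _
    · exact (hAB _).symm
    · omega
  have hmeas' (k : Fin (m + 1)) : Measurable (increment X (E' k) (F' k)) :=
    measurable_increment hmeas (hE' k k.isLt) (hF' k k.isLt)
  unfold increment
  simpa [E', F'] using
    (hii (m + 1) E' F' hE' hF' hdisj).indepFun_pi_of_ne hmeas' Fin.castSucc_ne_last

section Enumeration

variable {m : ℕ} {E : Fin m → Set T}

theorem biUnion_inter_eq_inter_biUnion_Iio (hlt : ∀ i j, E i < E j → i < j)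
    (hinter : ∀ i j, ∃ k, E k = E i ∩ E j) {s : Finset (Fin m)} {a : Fin m}
    (hsa : ∀ x ∈ s, x < a) (hS : ∀ t ∈ insert a s, ∀ j, E j ⊆ E t → j ∈ insert a s) :
    (⋃ j ∈ s, E j) ∩ E a = E a ∩ ⋃ i ∈ Finset.Iio a, E i := by
  have hmem : ∀ i < a, E i ⊆ E a → i ∈ s := fun i hi hia =>
    (Finset.mem_insert.1 (hS a (Finset.mem_insert_self a s) i hia)).resolve_left hi.ne
  ext x
  simp only [mem_inter_iff, mem_iUnion, Finset.mem_Iio, exists_prop]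
  constructor
  · rintro ⟨⟨j, hj, hxj⟩, hxa⟩
    exact ⟨hxa, j, hsa j hj, hxj⟩
  · rintro ⟨hxa, j, hja, hxj⟩
    refine ⟨?_, hxa⟩
    by_cases hja' : E j ⊆ E a
    · exact ⟨j, hmem j hja hja', hxj⟩
    · -- otherwise `E a ∩ E j` is a strictly smaller member of the family, hence earlier than `j`
      obtain ⟨k, hk⟩ := hinter a j
      have hkj : k < j := hlt k j <| hk ▸ ssubset_of_subset_of_ne inter_subset_right
        fun h => hja' (h ▸ inter_subset_left)
      exact ⟨k, hmem k (hkj.trans hja) (hk ▸ inter_subset_left), hk ▸ ⟨hxa, hxj⟩⟩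

theorem ae_eq_sum_increment (hemp : ∅ ∈ 𝒜) (hadd : AddExtension 𝒜 P X)
    (hE : ∀ j, E j ∈ 𝒜) (hinj : Function.Injective E) (hlt : ∀ i j, E i < E j → i < j)
    (hinter : ∀ i j, ∃ k, E k = E i ∩ E j) {S : Finset (Fin m)}
    (hS : ∀ t ∈ S, ∀ j, E j ⊆ E t → j ∈ S) :
    X (⋃ j ∈ S, E j) =ᵐ[P] fun ω => ∑ j ∈ S, increment X (E j) (⋃ i ∈ Finset.Iio j, E i) ω := by
  classical
  induction S using Finset.induction_on_max with
  | empty => filter_upwards [hadd.1] with ω hω using by simpa using hω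
  | insert a s hsa ih =>
    have hs : ∀ t ∈ s, ∀ j, E j ⊆ E t → j ∈ s := by
      intro t ht j hjt
      refine (Finset.mem_insert.1 (hS t (Finset.mem_insert_of_mem ht) j hjt)).resolve_left ?_
      rintro rfl
      rcases hjt.eq_or_ssubset with h | h
      · exact (hsa t ht).ne (hinj h).symm
      · exact (hsa t ht).not_gt (hlt _ _ h)
    have hEa : E a ∈ Au 𝒜 := mem_Au_of_mem (hE a)
    filter_upwards [ih hs, hadd.2 _ (biUnion_mem_Au hemp s fun j _ => hE j) _ hEa,
      hadd.2 _ hEa _ (biUnion_mem_Au hemp (Finset.Iio a) fun i _ => hE i)] with ω h1 h2 h3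
    rw [biUnion_inter_eq_inter_biUnion_Iio hlt hinter hsa hS] at h2
    rw [Finset.set_biUnion_insert, Finset.sum_insert fun ha => (hsa a ha).false, union_comm]
    simp only [increment] at h1 ⊢
    linarith

end Enumeration

theorem indepFun_increment_of_forall_eq_sUnion (hemp : ∅ ∈ 𝒜) (hmeas : MeasOnAu 𝒜 X)
    (hadd : AddExtension 𝒜 P X) (hii : IndepIncrements 𝒜 P X) {A B : Set T} (hA : A ∈ 𝒜)
    (hB : B ∈ Au 𝒜) {L : Set (Set T)} (hLfin : L.Finite) (hLinf : InfClosed L) (hL𝒜 : L ⊆ 𝒜)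
    (hLB : ∀ E ∈ L, E ⊆ B) {ι : Type*} [Countable ι] {D : ι → Set T}
    (hD : ∀ i, ∃ s ⊆ L, D i = ⋃₀ s) :
    IndepFun (fun ω i => X (D i) ω) (increment X A B) P := by
  classical
  obtain ⟨m, E, hinj, hrange, hlt⟩ := hLfin.exists_enum_lt_imp_lt
  have hEL (j : Fin m) : E j ∈ L := hrange ▸ mem_range_self j
  have hE (j : Fin m) : E j ∈ 𝒜 := hL𝒜 (hEL j)
  have hinter (i j : Fin m) : ∃ k, E k = E i ∩ E j :=
    (hrange ▸ hLinf (hEL i) (hEL j) : E i ∩ E j ∈ range E)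
  let F : Fin m → Set T := fun j => ⋃ i ∈ Finset.Iio j, E i
  have hdisj_lt : ∀ i j, i < j → Disjoint (E i \ F i) (E j \ F j) := fun i j hij =>
    disjoint_sdiff_right.mono_left <| sdiff_subset.trans <|
      subset_biUnion_of_mem (u := E) (Finset.mem_Iio.2 hij)
  have hW : IndepFun (fun ω j => increment X (E j) (F j) ω) (increment X A B) P := by
    refine hii.indepFun_increment hmeas hA hB hE (fun j => biUnion_mem_Au hemp _ fun i _ => hE i)
      (fun i j hij => ?_) fun j => disjoint_sdiff_right.mono_left <| sdiff_subset.trans <|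
        hLB _ (hEL j)
    rcases lt_or_gt_of_ne hij with h | h
    exacts [hdisj_lt i j h, (hdisj_lt j i h).symm]
  let S : ι → Finset (Fin m) := fun i => Finset.univ.filter fun j => E j ⊆ D i
  have hrep (i : ι) : X (D i) =ᵐ[P] fun ω => ∑ j ∈ S i, increment X (E j) (F j) ω := by
    have hDi : ⋃ j ∈ S i, E j = D i := by
      obtain ⟨s, hsL, hs⟩ := hD i
      refine subset_antisymm (iUnion₂_subset fun j hj => (Finset.mem_filter.1 hj).2) ?_
      intro x hx
      obtain ⟨t, ht, hxt⟩ := (hs ▸ hx : x ∈ ⋃₀ s)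
      obtain ⟨j, rfl⟩ : t ∈ range E := hrange ▸ hsL ht
      exact mem_biUnion (Finset.mem_filter.2 ⟨Finset.mem_univ j, hs ▸ subset_sUnion_of_mem ht⟩)
        hxt
    have := ae_eq_sum_increment hemp hadd hE hinj hlt hinter (S := S i) fun t ht j hjt =>
      Finset.mem_filter.2 ⟨Finset.mem_univ j, hjt.trans (Finset.mem_filter.1 ht).2⟩
    rwa [hDi] at this
  have hφ : Measurable fun (v : Fin m → ℝ) (i : ι) => ∑ j ∈ S i, v j :=
    measurable_pi_lambda _ fun i => Finset.measurable_sum _ fun j _ => measurable_pi_apply j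
  refine (hW.comp hφ measurable_id).congr ?_ .rfl
  filter_upwards [ae_all_iff.2 hrep] with ω hω
  funext i
  exact (hω i).symm

theorem indep_iSup_sigOf_increment [IsProbabilityMeasure P] (hemp : ∅ ∈ 𝒜) (hinf : InfClosed 𝒜)
    (hmeas : MeasOnAu 𝒜 X) (hadd : AddExtension 𝒜 P X) (hii : IndepIncrements 𝒜 P X)
    {A B : Set T} (hA : A ∈ 𝒜) (hB : B ∈ Au 𝒜) :
    Indep (⨆ D : {D // D ∈ Au 𝒜 ∧ D ⊆ B}, sigOf (X D)) (sigOf (increment X A B)) P := by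
  refine indep_iSup_of_forall_finset (fun F => ?_) (fun D => (hmeas D D.2.1).comap_le)
    (measurable_increment hmeas hA hB).comap_le
  choose s hs using fun D : F => D.1.2.1
  let G : Set (Set T) := ⋃ D, ↑(s D)
  have hGB : G ⊆ Iic B := iUnion_subset fun D E hE =>
    ((hs D).2.2 ▸ subset_sUnion_of_mem hE).trans D.1.2.2
  have := indepFun_increment_of_forall_eq_sUnion hemp hmeas hadd hii hA hB
    (L := infClosure G) (finite_iUnion fun D => (s D).finite_toSet).infClosure infClosed_infClosure
    (infClosure_min (iUnion_subset fun D => (hs D).1) hinf)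
    (fun E hE => infClosure_min hGB (fun _ ha _ _ => mem_Iic.2 (inf_le_left.trans ha)) hE)
    (D := fun D : F => D.1.1)
    fun D => ⟨s D, (subset_iUnion (fun D => (s D : Set (Set T))) D).trans subset_infClosure,
      (hs D).2.2⟩
  rw [iSup_subtype']
  exact this.indep_iSup_comap

end Increments

theorem statement9_general {T : Type*} [TopologicalSpace T]
    {Ω : Type*} [mΩ : MeasurableSpace Ω] (P : Measure Ω) [IsProbabilityMeasure P]
    (𝒜 : Set (Set T)) (h𝒜 : IsIndexing 𝒜)
    (X : Set T → Ω → ℝ) (hmeas : MeasOnAu 𝒜 X) (hadd : AddExtension 𝒜 P X)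
    (hii : IndepIncrements 𝒜 P X) :
    SetMarkov 𝒜 P X := by
  intro A hA B hB
  refine condIndepGiven_of_indep (iSup₂_le fun D hD => (hmeas D (mem_Au_of_mem hD.1)).comap_le)
    (measurable_increment hmeas hA hB).comap_le (hmeas B hB).comap_le ?_
  refine indep_of_indep_of_le_left
    (indep_iSup_sigOf_increment h𝒜.empty_mem h𝒜.infClosed hmeas hadd hii hA hB) ?_
  let σX : {D // D ∈ Au 𝒜 ∧ D ⊆ B} → MeasurableSpace Ω := fun D => sigOf (X D)
  exact sup_le (iSup₂_le fun D hD => le_iSup σX ⟨D, mem_Au_of_mem hD.1, hD.2⟩)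
    (le_iSup σX ⟨B, hB, subset_rfl⟩)

/-- every set-indexed process with independent increments is set-Markov. -/
theorem statement9 {T : Type*} [TopologicalSpace T] [CompactSpace T] [T2Space T]
    {Ω : Type*} [mΩ : MeasurableSpace Ω] (P : Measure Ω) [IsProbabilityMeasure P]
    (𝒜 : Set (Set T)) (h𝒜 : IsIndexing 𝒜)
    (X : Set T → Ω → ℝ) (hmeas : MeasOnAu 𝒜 X) (hadd : AddExtension 𝒜 P X)
    (hii : IndepIncrements 𝒜 P X) :
    SetMarkov 𝒜 P X :=
  statement9_general (mΩ := mΩ) P 𝒜 h𝒜 X hmeas hadd hii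

end SetIndexedMarkov
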